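/- Let $V:\mathbb{R}^d\to\mathbb{R}$ be $C^1$ bounded below and $F:\mathbb{R}^d\to\mathbb{R}$ be $C^1$, even, bounded below with $F(0)=0$. For absolutely continuous paths $g_1,\dots,g_N$ on $[0,T]$ with $g_i(0)=x$, define $$I^N(g_1,\dots,g_N)=\frac14\sum_{i=1}^N\int_0^T\Big\|\dot g_i(t)+\nabla V(g_i(t))+\frac1N\sum_{k=1}^N\nabla F(g_i(t)-g_k(t))\Big\|^2 dt.$$ Then $$I^N(g_1,\dots,g_N)\ \ge\ \frac14\sum_{i=1}^N\int_0^T\|\dot g_i(t)\|^2 dt + \frac{N}{2}\Big(\inf_z V(z)-V(x)\Big) + \frac{N}{4}\inf_z F(z).$$ -/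

import Mathlib

open MeasureTheory Finset RealInnerProductSpace

/-!
Write `bᵢ` for the drift `∇V(gᵢ) + (1/N) ∑ₖ ∇F(gᵢ - gₖ)`. Expanding the square gives
`‖ġᵢ + bᵢ‖² ≥ ‖ġᵢ‖² + 2⟪ġᵢ, bᵢ⟫`. Since `F` is even, `∇F` is odd, and then `bᵢ` is the gradient
in `yᵢ` of the energy `Φ(y) = ∑ᵢ V(yᵢ) + (1/2N) ∑ᵢ ∑ₖ F(yᵢ - yₖ)`. Hence
`∑ᵢ ∫ ⟪ġᵢ, bᵢ⟫ = Φ(g(T)) - Φ(g(0))`, where `Φ(g(0)) = N V(x)` because all particles start at `x`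
and `F 0 = 0`, while `Φ(g(T)) ≥ N inf V + (N/2) inf F`.
-/

section Gradient

variable {E : Type*} [NormedAddCommGroup E] [InnerProductSpace ℝ E] [CompleteSpace E]

theorem HasGradientAt.comp_hasDerivAt {f : E → ℝ} {f' : E} {c : ℝ → E} {c' : E} {t : ℝ}
    (hf : HasGradientAt f f' (c t)) (hc : HasDerivAt c c' t) :
    HasDerivAt (fun s => f (c s)) ⟪f', c'⟫ t := by
  simpa [InnerProductSpace.toDual_apply_apply, Function.comp_def] using
    hf.hasFDerivAt.comp_hasDerivAt t hc

-- No differentiability is needed: `fderiv_comp_smul` also holds where `fderiv` is the junk `0`.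
theorem Function.Even.odd_gradient {f : E → ℝ} (hf : f.Even) : (gradient f).Odd := by
  intro z
  have h := fderiv_comp_smul (f := f) (x := z) (-1 : ℝ)
  simp only [neg_smul, one_smul, funext hf] at h
  simp only [gradient, h, map_neg, neg_neg]

theorem ContDiff.continuous_gradient {f : E → ℝ} (hf : ContDiff ℝ 1 f) :
    Continuous (gradient f) :=
  (InnerProductSpace.toDual ℝ E).symm.continuous.comp (hf.continuous_fderiv one_ne_zero)

end Gradient

theorem ContinuousOn.memLp_restrict_of_isCompact {α E : Type*} [MeasurableSpace α]
    [TopologicalSpace α] [OpensMeasurableSpace α] {μ : Measure α} [IsFiniteMeasureOnCompacts μ]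
    [NormedAddCommGroup E] {u : α → E} {s : Set α} (hs : IsCompact s) (h's : MeasurableSet s)
    (hf : ContinuousOn u s) (p : ENNReal) : MemLp u p (μ.restrict s) := by
  have : IsFiniteMeasure (μ.restrict s) := isFiniteMeasure_restrict.2 hs.measure_lt_top.ne
  obtain ⟨C, hC⟩ := hs.exists_bound_of_continuousOn hf
  refine (memLp_top_of_bound (hf.aestronglyMeasurable_of_isCompact hs h's) C ?_).mono_exponent
    le_top
  filter_upwards [ae_restrict_mem h's] with t ht using hC t ht

section SquareIntegrable

variable {α E : Type*} [MeasurableSpace α] {μ : Measure α}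
  [NormedAddCommGroup E] [InnerProductSpace ℝ E] {u v : α → E}

theorem MeasureTheory.MemLp.integrable_inner (hu : MemLp u 2 μ) (hv : MemLp v 2 μ) :
    Integrable (fun t => ⟪u t, v t⟫) μ := by
  have h := (((hu.add hv).norm.integrable_sq.sub hu.norm.integrable_sq).sub
    hv.norm.integrable_sq).div_const 2
  refine h.congr (ae_of_all _ fun t => ?_)
  simp only [Pi.sub_apply, Pi.add_apply,
    real_inner_eq_norm_add_mul_self_sub_norm_mul_self_sub_norm_mul_self_div_two, sq]

theorem integral_norm_sq_add_two_mul_integral_inner_le (hu : MemLp u 2 μ) (hv : MemLp v 2 μ) :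
    ∫ t, ‖u t‖ ^ 2 ∂μ + 2 * ∫ t, ⟪u t, v t⟫ ∂μ ≤ ∫ t, ‖u t + v t‖ ^ 2 ∂μ := by
  rw [← integral_const_mul, ← integral_add hu.norm.integrable_sq
    ((hu.integrable_inner hv).const_mul 2)]
  refine integral_mono ?_ (hu.add hv).norm.integrable_sq fun t => ?_
  · exact hu.norm.integrable_sq.add ((hu.integrable_inner hv).const_mul 2)
  · nlinarith [norm_add_sq_real (u t) (v t), sq_nonneg ‖v t‖]

end SquareIntegrable

section MeanFieldEnergy

variable {ι E : Type*} [Fintype ι] [AddGroup E]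

noncomputable def meanFieldEnergy (V F : E → ℝ) (c : ℝ) (y : ι → E) : ℝ :=
  ∑ i, V (y i) + c / 2 * ∑ i, ∑ k, F (y i - y k)

variable {V F : E → ℝ} {c : ℝ}

theorem meanFieldEnergy_const (hF0 : F 0 = 0) (x : E) :
    meanFieldEnergy V F c (fun _ : ι => x) = Fintype.card ι * V x := by
  simp [meanFieldEnergy, hF0]

theorem le_meanFieldEnergy (hc : 0 ≤ c) (hV : BddBelow (Set.range V))
    (hF : BddBelow (Set.range F)) (y : ι → E) :
    Fintype.card ι * (⨅ z, V z) + c / 2 * (Fintype.card ι ^ 2 * ⨅ z, F z)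
      ≤ meanFieldEnergy V F c y := by
  have hVy : Fintype.card ι * (⨅ z, V z) ≤ ∑ i, V (y i) := by
    simpa using Finset.sum_le_sum fun i (_ : i ∈ univ) => ciInf_le hV (y i)
  have hFy : Fintype.card ι ^ 2 * (⨅ z, F z) ≤ ∑ i, ∑ k, F (y i - y k) := by
    simpa [sq, mul_assoc] using Finset.sum_le_sum fun i (_ : i ∈ univ) =>
      Finset.sum_le_sum fun k (_ : k ∈ univ) => ciInf_le hF (y i - y k)
  exact add_le_add hVy (mul_le_mul_of_nonneg_left hFy (div_nonneg hc zero_le_two))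

end MeanFieldEnergy

section MeanFieldDrift

variable {ι E : Type*} [Fintype ι] [NormedAddCommGroup E] [InnerProductSpace ℝ E]

theorem sum_sum_inner_sub_of_odd {G : E → E} (hG : G.Odd) (y v : ι → E) :
    ∑ i, ∑ k, ⟪G (y i - y k), v i - v k⟫ = 2 * ∑ i, ∑ k, ⟪G (y i - y k), v i⟫ := by
  have hswap : ∑ i, ∑ k, ⟪G (y i - y k), v k⟫ = -∑ i, ∑ k, ⟪G (y i - y k), v i⟫ := by
    rw [Finset.sum_comm, ← Finset.sum_neg_distrib]
    refine Finset.sum_congr rfl fun k _ => ?_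
    rw [← Finset.sum_neg_distrib]
    refine Finset.sum_congr rfl fun i _ => ?_
    rw [← neg_sub, hG.eq, inner_neg_left]
  simp only [inner_sub_right, Finset.sum_sub_distrib, hswap]
  ring

variable [CompleteSpace E]

noncomputable def meanFieldDrift (V F : E → ℝ) (c : ℝ) (y : ι → E) (i : ι) : E :=
  gradient V (y i) + c • ∑ k, gradient F (y i - y k)

variable {V F : E → ℝ} {c : ℝ}

theorem hasDerivAt_meanFieldEnergy (hV : Differentiable ℝ V) (hF : Differentiable ℝ F)
    (hFeven : F.Even) {g : ι → ℝ → E} {g' : ι → E} {t : ℝ}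
    (hg : ∀ i, HasDerivAt (g i) (g' i) t) :
    HasDerivAt (fun s => meanFieldEnergy V F c (fun i => g i s))
      (∑ i, ⟪g' i, meanFieldDrift V F c (fun k => g k t) i⟫) t := by
  have hVg := HasDerivAt.fun_sum fun i (_ : i ∈ univ) =>
    (hV (g i t)).hasGradientAt.comp_hasDerivAt (hg i)
  have hFg := HasDerivAt.fun_sum fun i (_ : i ∈ univ) => HasDerivAt.fun_sum fun k (_ : k ∈ univ) =>
    (hF (g i t - g k t)).hasGradientAt.comp_hasDerivAt ((hg i).sub (hg k))
  refine (hVg.add (hFg.const_mul (c / 2))).congr_deriv ?_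
  rw [sum_sum_inner_sub_of_odd hFeven.odd_gradient]
  simp only [meanFieldDrift, inner_add_right, inner_smul_right, inner_sum, Finset.sum_add_distrib,
    ← Finset.mul_sum, real_inner_comm (g' _)]
  ring

theorem continuous_meanFieldDrift (hV : Continuous (gradient V)) (hF : Continuous (gradient F))
    (i : ι) : Continuous fun y : ι → E => meanFieldDrift V F c y i := by
  unfold meanFieldDrift
  fun_prop

theorem sum_integral_inner_meanFieldDrift (hV : Differentiable ℝ V) (hF : Differentiable ℝ F)
    (hFeven : F.Even) {g g' : ι → ℝ → E} {a b : ℝ} (hab : a ≤ b)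
    (hg : ∀ i, ∀ t ∈ Set.Icc a b, HasDerivAt (g i) (g' i t) t)
    (hint : ∀ i, IntervalIntegrable
      (fun t => ⟪g' i t, meanFieldDrift V F c (fun k => g k t) i⟫) volume a b) :
    ∑ i, ∫ t in a..b, ⟪g' i t, meanFieldDrift V F c (fun k => g k t) i⟫
      = meanFieldEnergy V F c (fun i => g i b) - meanFieldEnergy V F c (fun i => g i a) := by
  rw [← intervalIntegral.integral_finsetSum fun i _ => hint i]
  refine intervalIntegral.integral_eq_sub_of_hasDerivAt
    (f := fun s => meanFieldEnergy V F c (fun i => g i s)) (fun t ht => ?_) ?_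
  · rw [Set.uIcc_of_le hab] at ht
    exact hasDerivAt_meanFieldEnergy hV hF hFeven fun i => hg i t ht
  · simpa only [Finset.sum_fn] using IntervalIntegrable.sum univ fun i _ => hint i

end MeanFieldDrift

theorem rate_function_lower_bound_general
    (d N : ℕ) (T : ℝ) (hT : 0 < T)
    (x : EuclideanSpace ℝ (Fin d))
    (g g' : Fin N → ℝ → EuclideanSpace ℝ (Fin d))
    (hstart : ∀ i, g i 0 = x)
    (hderiv : ∀ i, ∀ t ∈ Set.Icc (0 : ℝ) T, HasDerivAt (g i) (g' i t) t)
    (hL2 : ∀ i, MemLp (g' i) 2 (volume.restrict (Set.Icc (0 : ℝ) T)))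
    (V : EuclideanSpace ℝ (Fin d) → ℝ)
    (hV : ContDiff ℝ 1 V) (hVbdd : BddBelow (Set.range V))
    (F : EuclideanSpace ℝ (Fin d) → ℝ)
    (hF : ContDiff ℝ 1 F) (hFeven : ∀ z, F (-z) = F z) (hF0 : F 0 = 0)
    (hFbdd : BddBelow (Set.range F)) :
    (1 / 4) * ∑ i, ∫ t in (0 : ℝ)..T,
        ‖g' i t + gradient V (g i t)
          + (1 / (N : ℝ)) • ∑ k, gradient F (g i t - g k t)‖ ^ 2
      ≥ (1 / 4) * ∑ i, (∫ t in (0 : ℝ)..T, ‖g' i t‖ ^ 2)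
        + ((N : ℝ) / 2) * ((⨅ z, V z) - V x)
        + ((N : ℝ) / 4) * ⨅ z, F z := by
  set μ := volume.restrict (Set.Icc (0 : ℝ) T)
  set b : Fin N → ℝ → EuclideanSpace ℝ (Fin d) :=
    fun i t => meanFieldDrift V F (1 / N) (fun k => g k t) i
  have hbL2 : ∀ i, MemLp (b i) 2 μ := fun i =>
    ((continuous_meanFieldDrift hV.continuous_gradient hF.continuous_gradient i).comp_continuousOn
      (continuousOn_pi.2 fun k => HasDerivAt.continuousOn (hderiv k))).memLp_restrict_of_isCompact
      isCompact_Icc measurableSet_Icc 2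
  have hbalance : ∑ i, ∫ t in (0 : ℝ)..T, ⟪g' i t, b i t⟫
      = meanFieldEnergy V F (1 / N) (fun i => g i T)
        - meanFieldEnergy V F (1 / N) (fun i => g i 0) :=
    sum_integral_inner_meanFieldDrift (hV.differentiable one_ne_zero)
      (hF.differentiable one_ne_zero) hFeven hT.le hderiv fun i =>
      (intervalIntegrable_iff_integrableOn_Icc_of_le hT.le).2 ((hL2 i).integrable_inner (hbL2 i))
  have hquad : ∀ i, (∫ t in (0 : ℝ)..T, ‖g' i t‖ ^ 2) + 2 * ∫ t in (0 : ℝ)..T, ⟪g' i t, b i t⟫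
      ≤ ∫ t in (0 : ℝ)..T, ‖g' i t + b i t‖ ^ 2 := fun i => by
    simp only [intervalIntegral.integral_of_le hT.le, ← integral_Icc_eq_integral_Ioc]
    exact integral_norm_sq_add_two_mul_integral_inner_le (hL2 i) (hbL2 i)
  have hstart_energy : meanFieldEnergy V F (1 / N) (fun i => g i 0) = N * V x := by
    simpa only [hstart, Fintype.card_fin] using
      meanFieldEnergy_const (ι := Fin N) (V := V) (c := 1 / N) hF0 x
  have hend_energy := le_meanFieldEnergy (c := 1 / N) (by positivity) hVbdd hFbdd (fun i => g i T)
  have hcoef : 1 / (N : ℝ) / 2 * ((N : ℝ) ^ 2 * ⨅ z, F z) = N / 2 * ⨅ z, F z := by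
    rcases eq_or_ne (N : ℝ) 0 with h | h
    · simp [h]
    · field_simp
  rw [Fintype.card_fin, hcoef] at hend_energy
  have hintegrand : ∀ i t, g' i t + gradient V (g i t)
      + (1 / (N : ℝ)) • ∑ k, gradient F (g i t - g k t) = g' i t + b i t :=
    fun _ _ => add_assoc _ _ _
  have hsum := Finset.sum_le_sum fun i (_ : i ∈ univ) => hquad i
  rw [Finset.sum_add_distrib, ← Finset.mul_sum, hbalance, hstart_energy] at hsum
  simp only [hintegrand]
  linarith

theorem rate_function_lower_bound
    (d N : ℕ) (hN : 0 < N) (T : ℝ) (hT : 0 < T)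
    (x : EuclideanSpace ℝ (Fin d))
    (g g' : Fin N → ℝ → EuclideanSpace ℝ (Fin d))
    (hstart : ∀ i, g i 0 = x)
    (hderiv : ∀ i, ∀ t ∈ Set.Icc (0 : ℝ) T, HasDerivAt (g i) (g' i t) t)
    (hL2 : ∀ i, MemLp (g' i) 2 (volume.restrict (Set.Icc (0 : ℝ) T)))
    (V : EuclideanSpace ℝ (Fin d) → ℝ)
    (hV : ContDiff ℝ 1 V) (hVbdd : BddBelow (Set.range V))
    (F : EuclideanSpace ℝ (Fin d) → ℝ)
    (hF : ContDiff ℝ 1 F) (hFeven : ∀ z, F (-z) = F z) (hF0 : F 0 = 0)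
    (hFbdd : BddBelow (Set.range F)) :
    (1 / 4) * ∑ i, ∫ t in (0 : ℝ)..T,
        ‖g' i t + gradient V (g i t)
          + (1 / (N : ℝ)) • ∑ k, gradient F (g i t - g k t)‖ ^ 2
      ≥ (1 / 4) * ∑ i, (∫ t in (0 : ℝ)..T, ‖g' i t‖ ^ 2)
        + ((N : ℝ) / 2) * ((⨅ z, V z) - V x)
        + ((N : ℝ) / 4) * ⨅ z, F z :=
  rate_function_lower_bound_general d N T hT x g g' hstart hderiv hL2 V hV hVbdd F hF hFeven hF0
    hFbdd
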